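/- Let x and y be words of length n over {0,…,q−1} with deletion sets D, E ⊆ {1,…,n} of equal size at most d such that x^{(D)} = y^{(E)}. Then the difference of moments satisfies Δ(x,y) = M(x) − M(y) ≤ w_{n+1}(q,d) − 1; in particular Δ(x,y) < m for any m ≥ w_{n+1}. -/

import Mathlib

/-- Weight sequence: `W p d i` = w_i(q,d) where p = q-1; w_i = 0 for i ≤ 0 (encoded by
ℕ truncated subtraction together with `W p d 0 = 0`), and w_i = 1 + p·∑_{j=1}^d w_{i-j}
for i ≥ 1. -/
def W (p d : ℕ) : ℕ → ℕ
  | 0 => 0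
  | (i+1) => 1 + p * ∑ j ∈ Finset.range d, W p d (i - j)
decreasing_by exact Nat.lt_succ_of_le (Nat.sub_le i j)

/-- Moment of a word (1-indexed): M(x) = ∑_{i=1}^{n} w_i x_i. -/
def moment (w : ℕ → ℕ) (x : List ℕ) : ℕ :=
  ∑ i ∈ Finset.range x.length, w (i + 1) * x.getD i 0

/-- Deleted word x^{(D)}: delete the symbols at the (1-indexed) positions in D,
keeping the remaining symbols in order. -/
def deleteD (x : List ℕ) (D : Finset ℕ) : List ℕ :=
  ((List.range x.length).filter (fun i => (i + 1) ∉ D)).map (fun i => x.getD i 0)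

/-!
Deleting `D` from `x` (and `E` from `y`) leaves a common subsequence `z` of `x` and `y`, of
length at least `n - d`. The weights are nondecreasing, so pushing the letters of `z` to later
positions can only raise the moment: `M(z) ≤ M(y)`. For the same reason, and since every letter
of `x` is at most `p = q - 1`, `M(x) ≤ M(z) + p (w_{|z|+1} + ⋯ + w_n)`, and the last sum has at
most `d` terms, so it is at most `p (w_n + ⋯ + w_{n-d+1}) = w_{n+1} - 1`.
-/

open Finset
open scoped List

lemma W_le_W_succ (p d i : ℕ) : W p d i ≤ W p d (i + 1) := by
  induction i using Nat.strong_induction_on with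
  | _ i ih =>
    cases i with
    | zero => rw [W]; exact Nat.zero_le _
    | succ i =>
      rw [W, W]
      gcongr with j
      obtain h | h : i + 1 - j = i - j + 1 ∨ i - j = 0 := by omega
      · rw [h]; exact ih _ (by omega)
      · rw [h, W]; exact Nat.zero_le _

lemma W_monotone (p d : ℕ) : Monotone (W p d) :=
  monotone_nat_of_le_succ (W_le_W_succ p d)

lemma List.sublist_append_singleton_iff {α : Type*} {l r : List α} {a : α} :
    l <+ r ++ [a] ↔ l <+ r ∨ ∃ l', l = l' ++ [a] ∧ l' <+ r := by
  rw [List.sublist_append_iff]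
  constructor
  · rintro ⟨l₁, l₂, rfl, h₁, h₂⟩
    rcases List.sublist_singleton.1 h₂ with rfl | rfl
    · simpa using Or.inl h₁
    · exact Or.inr ⟨l₁, rfl, h₁⟩
  · rintro (h | ⟨l', rfl, h⟩)
    · exact ⟨l, [], by simp, h, by simp⟩
    · exact ⟨l', [a], rfl, h, List.Sublist.refl _⟩

lemma Finset.sum_Ico_succ_eq_sum_range_sub {M : Type*} [AddCommMonoid M] (f : ℕ → M)
    {c n : ℕ} (hcn : c ≤ n) :
    ∑ i ∈ Ico c n, f (i + 1) = ∑ j ∈ range (n - c), f (n - j) := by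
  rw [range_eq_Ico, sum_Ico_reflect f 0 (by omega), sum_Ico_add' f c n 1]
  congr 2; omega

section Moment

variable {w : ℕ → ℕ}

lemma moment_append_singleton (l : List ℕ) (a : ℕ) :
    moment w (l ++ [a]) = moment w l + w (l.length + 1) * a := by
  unfold moment
  rw [List.length_append, List.length_singleton, sum_range_succ]
  congr 1
  · refine sum_congr rfl fun i hi => ?_
    rw [List.getD_append _ _ _ _ (mem_range.1 hi)]
  · simp

lemma moment_le_of_sublist (hw : Monotone w) {y z : List ℕ} (h : z <+ y) :
    moment w z ≤ moment w y := by
  induction y using List.reverseRecOn generalizing z with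
  | nil => rw [List.sublist_nil.1 h]
  | append_singleton y a ih =>
    rw [moment_append_singleton]
    rcases List.sublist_append_singleton_iff.1 h with h | ⟨z, rfl, hz⟩
    · exact (ih h).trans (Nat.le_add_right _ _)
    · rw [moment_append_singleton]
      exact Nat.add_le_add (ih hz) (Nat.mul_le_mul_right a (hw (by simpa using hz.length_le)))

lemma moment_le_moment_add_of_sublist (hw : Monotone w) {p : ℕ} {x z : List ℕ}
    (hx : ∀ a ∈ x, a ≤ p) (h : z <+ x) :
    moment w x ≤ moment w z + p * ∑ i ∈ Ico z.length x.length, w (i + 1) := by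
  induction x using List.reverseRecOn generalizing z with
  | nil => simp [List.sublist_nil.1 h, moment]
  | append_singleton x a ih =>
    have ha : a ≤ p := hx a (by simp)
    replace ih := fun {z} (h : z <+ x) => ih (fun b hb => hx b (by simp [hb])) h
    rw [moment_append_singleton, List.length_append, List.length_singleton]
    rcases List.sublist_append_singleton_iff.1 h with h | ⟨z, rfl, hz⟩
    · have hlast : w (x.length + 1) * a ≤ p * w (x.length + 1) :=
        (Nat.mul_comm _ _).trans_le (Nat.mul_le_mul_right _ ha)
      rw [sum_Ico_succ_top h.length_le, mul_add]
      linarith [ih h]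
    · have hzx := hz.length_le
      have hsum : ∑ i ∈ Ico z.length x.length, w (i + 1) + w (x.length + 1) =
          w (z.length + 1) + ∑ i ∈ Ico (z.length + 1) (x.length + 1), w (i + 1) := by
        rw [← sum_Ico_succ_top hzx, sum_eq_sum_Ico_succ_bot (by omega)]
      have hmono : w (z.length + 1) ≤ w (x.length + 1) := hw (by omega)
      rw [moment_append_singleton, List.length_append, List.length_singleton]
      -- what remains is `(w (|x| + 1) - w (|z| + 1)) * (p - a) ≥ 0`
      nlinarith [ih hz]

end Moment

lemma List.map_getD_range_length {α : Type*} (x : List α) (a : α) :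
    (List.range x.length).map (fun i => x.getD i a) = x :=
  List.ext_getElem (by simp) fun i _ h => by simp [h]

lemma deleteD_sublist (x : List ℕ) (D : Finset ℕ) : deleteD x D <+ x := by
  conv_rhs => rw [← x.map_getD_range_length 0]
  exact List.filter_sublist.map _

lemma length_sub_card_le_length_deleteD (x : List ℕ) (D : Finset ℕ) :
    x.length - D.card ≤ (deleteD x D).length := by
  have hdeleted : ((List.range x.length).filter fun i => decide (i + 1 ∈ D)).length ≤ D.card :=
    card_le_card_of_injOn (s := (range x.length).filter fun i => i + 1 ∈ D) (· + 1)
      (fun i hi => (mem_filter.1 hi).2) (fun i _ j _ h => Nat.succ_injective h)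
  have hsplit := List.length_eq_length_filter_add (l := List.range x.length)
    (fun i => decide (i + 1 ∈ D))
  have hfilter : (List.range x.length).filter (fun i => decide (i + 1 ∉ D)) =
      (List.range x.length).filter (fun i => !decide (i + 1 ∈ D)) := by simp
  rw [List.length_range] at hsplit
  rw [deleteD, List.length_map, hfilter]
  omega

theorem moment_diff_le_general (q d n : ℕ)
    (x y : List ℕ) (hxlen : x.length = n)
    (hx : ∀ a ∈ x, a < q)
    (D E : Finset ℕ)
    (hd' : D.card ≤ d)
    (hdel : deleteD x D = deleteD y E) :
    (moment (W (q - 1) d) x : ℤ) - (moment (W (q - 1) d) y : ℤ) ≤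
      (W (q - 1) d (n + 1) : ℤ) - 1 := by
  have hzx := deleteD_sublist x D
  have hzy : deleteD x D <+ y := hdel ▸ deleteD_sublist y E
  have hzn : (deleteD x D).length ≤ n := hxlen ▸ hzx.length_le
  have hnz : n - d ≤ (deleteD x D).length := by
    have := length_sub_card_le_length_deleteD x D; omega
  have hxz := moment_le_moment_add_of_sublist (W_monotone (q - 1) d)
    (fun a ha => Nat.le_sub_one_of_lt (hx a ha)) hzx
  have hmzy := moment_le_of_sublist (W_monotone (q - 1) d) hzy
  have htail : ∑ i ∈ Ico (deleteD x D).length n, W (q - 1) d (i + 1) ≤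
      ∑ j ∈ range d, W (q - 1) d (n - j) := by
    rw [sum_Ico_succ_eq_sum_range_sub _ hzn]
    exact sum_le_sum_of_subset (range_subset_range.2 (by omega))
  have hW : W (q - 1) d (n + 1) = 1 + (q - 1) * ∑ j ∈ range d, W (q - 1) d (n - j) := by
    rw [W]
  rw [hxlen] at hxz
  have := Nat.mul_le_mul_left (q - 1) htail
  omega

theorem moment_diff_le (q d n : ℕ) (hq : 2 ≤ q) (hd : 1 ≤ d)
    (x y : List ℕ) (hxlen : x.length = n) (hylen : y.length = n)
    (hx : ∀ a ∈ x, a < q) (hy : ∀ a ∈ y, a < q)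
    (D E : Finset ℕ) (hD : D ⊆ Finset.Icc 1 n) (hE : E ⊆ Finset.Icc 1 n)
    (hcard : D.card = E.card) (hd' : D.card ≤ d)
    (hdel : deleteD x D = deleteD y E) :
    (moment (W (q - 1) d) x : ℤ) - (moment (W (q - 1) d) y : ℤ) ≤
      (W (q - 1) d (n + 1) : ℤ) - 1 :=
  moment_diff_le_general q d n x y hxlen hx D E hd' hdel
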